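/- (Two invariant parallel spinors for example (3).) Fix t > 0 and let the connection matrices of example (3) be A₁ = −t(E₁₇+E₃₅), A₂ = 0, A₃ = −t(E₁₅−2E₃₇−E₄₆), A₄ = −t(−E₃₆+E₄₇), A₅ = −t(E₁₃+E₅₇), A₆ = −t(E₃₄+E₆₇), A₇ = 0. Then the space {ψ ∈ ℝ⁸ : σ(A_i)·ψ = 0 for all i = 1,…,7} is exactly the two-dimensional linear span of (0,0,0,0,1,1,−1,1) and (1,1,1,−1,0,0,0,0). -/

import Mathlib

open Matrix

noncomputable section

/-- `E8 i j` is the 8×8 skew-symmetric matrix sending the `i`-th basis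
vector to the `j`-th, the `j`-th to minus the `i`-th, and all others to 0. -/
def E8 (i j : Fin 8) : Matrix (Fin 8) (Fin 8) ℝ :=
  Matrix.single j i 1 - Matrix.single i j 1

/-- The matrices `e₁,…,e₇` of the 7-dimensional spin representation on ℝ⁸
(indices shifted to be 0-based). -/
def g : Fin 7 → Matrix (Fin 8) (Fin 8) ℝ :=
  ![E8 0 7 + E8 1 6 - E8 2 5 - E8 3 4,
    -E8 0 6 + E8 1 7 + E8 2 4 - E8 3 5,
    -E8 0 5 + E8 1 4 - E8 2 7 + E8 3 6,
    -E8 0 4 - E8 1 5 - E8 2 6 - E8 3 7,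
    -E8 0 2 - E8 1 3 + E8 4 6 + E8 5 7,
    E8 0 3 - E8 1 2 - E8 4 7 + E8 5 6,
    E8 0 1 - E8 2 3 - E8 4 5 + E8 6 7]

/-- 7×7 version of `E_{ij}`. -/
def E7 (i j : Fin 7) : Matrix (Fin 7) (Fin 7) ℝ :=
  Matrix.single j i 1 - Matrix.single i j 1

/-- The spin lift `σ(A) = (1/2) Σ_{p<q} a_{pq} e_p e_q` of a skew-symmetric
7×7 matrix `A = Σ_{p<q} a_{pq} E_{pq}` (so that `a_{pq} = A q p` for `p < q`). -/
def spinLift (A : Matrix (Fin 7) (Fin 7) ℝ) : Matrix (Fin 8) (Fin 8) ℝ :=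
  (1/2 : ℝ) • ∑ p : Fin 7, ∑ q : Fin 7, if p < q then A q p • (g p * g q) else 0

/-- Clifford action of the interior product `e_i ⌟ e_{abc}` (for `a<b<c`). -/
def contr (i a b c : Fin 7) : Matrix (Fin 8) (Fin 8) ℝ :=
  (if i = a then g b * g c else 0) - (if i = b then g a * g c else 0) +
    (if i = c then g a * g b else 0)

/-- The ordered index triples (0-based) of the eleven basis 3-forms spanning `Λ³₁₁`:
`e₁₂₅, e₁₃₆, e₂₄₆, e₃₄₅, e₁₂₆, e₃₄₆, e₁₃₅, e₂₄₅, e₁₄₇, e₅₆₇, e₂₃₇`. -/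
def tri : Fin 11 → Fin 7 × Fin 7 × Fin 7 :=
  ![(0,1,4),(0,2,5),(1,3,5),(2,3,4),(0,1,5),(2,3,5),(0,2,4),(1,3,4),(0,3,6),(4,5,6),(1,2,6)]

/-- For `T = Σ_k c_k e_{tri k} ∈ Λ³₁₁`, the Clifford action `Cl(e_i ⌟ T)`. -/
def clContr (c : Fin 11 → ℝ) (i : Fin 7) : Matrix (Fin 8) (Fin 8) ℝ :=
  ∑ k : Fin 11, c k • contr i (tri k).1 (tri k).2.1 (tri k).2.2

/-- `ψ` is `∇ᵀ`-parallel for connection matrices `A` and torsion `T ∈ Λ³₁₁`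
with coefficient vector `c`. -/
def IsParallel (A : Fin 7 → Matrix (Fin 7) (Fin 7) ℝ) (c : Fin 11 → ℝ)
    (ψ : Fin 8 → ℝ) : Prop :=
  ∀ i : Fin 7, (spinLift (A i)).mulVec ψ + (clContr c i).mulVec ψ = 0

/-- Connection matrices of example (3). -/
def Aex3 (t : ℝ) : Fin 7 → Matrix (Fin 7) (Fin 7) ℝ :=
  ![(-t) • (E7 0 6 + E7 2 4), 0,
    (-t) • (E7 0 4 - (2:ℝ) • E7 2 6 - E7 3 5),
    (-t) • (-E7 2 5 + E7 3 6),
    (-t) • (E7 0 2 + E7 4 6),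
    (-t) • (E7 2 3 + E7 5 6), 0]

/-!
The spin lift `σ` is linear and `σ(E_pq) = ½ e_p e_q` for `p < q`, so each `σ(A_i)` is `-t/2` times
an integer combination of products `e_p e_q`. These integer matrices are evaluated exactly over `ℤ`
and transported to any ring along `Int.cast`. Over `ℤ` one checks that both spinors are
annihilated by all seven of them; conversely the equations `σ(A₁)ψ = σ(A₃)ψ = 0` alone
already pin `ψ` down to `ψ₅ · (0,0,0,0,1,1,-1,1) + ψ₁ · (1,1,1,-1,0,0,0,0)`.
-/

namespace Spin7

variable (R : Type*) [Ring R]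

def basisE (i j : Fin 8) : Matrix (Fin 8) (Fin 8) R :=
  Matrix.single j i 1 - Matrix.single i j 1

def gen : Fin 7 → Matrix (Fin 8) (Fin 8) R :=
  ![basisE R 0 7 + basisE R 1 6 - basisE R 2 5 - basisE R 3 4,
    -basisE R 0 6 + basisE R 1 7 + basisE R 2 4 - basisE R 3 5,
    -basisE R 0 5 + basisE R 1 4 - basisE R 2 7 + basisE R 3 6,
    -basisE R 0 4 - basisE R 1 5 - basisE R 2 6 - basisE R 3 7,
    -basisE R 0 2 - basisE R 1 3 + basisE R 4 6 + basisE R 5 7,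
    basisE R 0 3 - basisE R 1 2 - basisE R 4 7 + basisE R 5 6,
    basisE R 0 1 - basisE R 2 3 - basisE R 4 5 + basisE R 6 7]

/-- `ex3Spin ℝ i = -(2/t) σ(A_i)`, see `spinLift_Aex3`. -/
def ex3Spin : Fin 7 → Matrix (Fin 8) (Fin 8) R :=
  ![gen R 0 * gen R 6 + gen R 2 * gen R 4, 0,
    gen R 0 * gen R 4 - 2 • (gen R 2 * gen R 6) - gen R 3 * gen R 5,
    -(gen R 2 * gen R 5) + gen R 3 * gen R 6,
    gen R 0 * gen R 2 + gen R 4 * gen R 6,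
    gen R 2 * gen R 3 + gen R 5 * gen R 6, 0]

def spinor₁ : Fin 8 → R := ![0, 0, 0, 0, 1, 1, -1, 1]

def spinor₂ : Fin 8 → R := ![1, 1, 1, -1, 0, 0, 0, 0]

theorem g_eq_gen : g = gen ℝ := rfl

theorem ex3Spin_int_zero : ex3Spin ℤ 0 =
    !![0, 0, 0, 0, 0, 0, -1, -1;
       0, 0, 0, 0, 0, 0, 1, 1;
       0, 0, 0, 0, -1, 1, 0, 0;
       0, 0, 0, 0, -1, 1, 0, 0;
       0, 0, 1, 1, 0, 0, 0, 0;
       0, 0, -1, -1, 0, 0, 0, 0;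
       1, -1, 0, 0, 0, 0, 0, 0;
       1, -1, 0, 0, 0, 0, 0, 0] := by
  decide

theorem ex3Spin_int_two : ex3Spin ℤ 2 =
    !![0, 0, 0, 0, 2, -1, 0, -1;
       0, 0, 0, 0, -1, 2, 1, 0;
       0, 0, 0, 0, 0, -1, -2, -1;
       0, 0, 0, 0, 1, 0, -1, -2;
       -2, 1, 0, -1, 0, 0, 0, 0;
       1, -2, 1, 0, 0, 0, 0, 0;
       0, -1, 2, 1, 0, 0, 0, 0;
       1, 0, 1, 2, 0, 0, 0, 0] := by
  decide

theorem ex3Spin_int_mulVec_spinor (i : Fin 7) :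
    ex3Spin ℤ i *ᵥ spinor₁ ℤ = 0 ∧ ex3Spin ℤ i *ᵥ spinor₂ ℤ = 0 := by
  revert i
  decide

variable {R} {S : Type*} [Ring S]

theorem map_basisE (f : R →+* S) (i j : Fin 8) : (basisE R i j).map f = basisE S i j := by
  ext a b
  simp [basisE, Matrix.single_apply, apply_ite f]

theorem map_gen (f : R →+* S) (p : Fin 7) : (gen R p).map f = gen S p := by
  fin_cases p <;> simp [gen, Matrix.map_add, Matrix.map_sub, Matrix.map_neg, map_basisE]

theorem map_ex3Spin (f : R →+* S) (i : Fin 7) : (ex3Spin R i).map f = ex3Spin S i := by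
  have hgen := map_gen f
  fin_cases i <;> simp [ex3Spin, ← RingHom.mapMatrix_apply, ← hgen, map_ofNat]

theorem comp_spinor₁ (f : R →+* S) : f ∘ spinor₁ R = spinor₁ S := by
  ext k; fin_cases k <;> simp [spinor₁]

theorem comp_spinor₂ (f : R →+* S) : f ∘ spinor₂ R = spinor₂ S := by
  ext k; fin_cases k <;> simp [spinor₂]

theorem mulVec_map_eq_zero (f : R →+* S) {m n : Type*} [Fintype n] {M : Matrix m n R}
    {v : n → R} (h : M *ᵥ v = 0) : M.map f *ᵥ (f ∘ v) = 0 := by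
  ext k
  rw [← RingHom.map_mulVec, h, Pi.zero_apply, map_zero, Pi.zero_apply]

theorem ex3Spin_mulVec_spinor₁ (i : Fin 7) : ex3Spin R i *ᵥ spinor₁ R = 0 := by
  rw [← map_ex3Spin (Int.castRingHom R), ← comp_spinor₁ (Int.castRingHom R)]
  exact mulVec_map_eq_zero _ (ex3Spin_int_mulVec_spinor i).1

theorem ex3Spin_mulVec_spinor₂ (i : Fin 7) : ex3Spin R i *ᵥ spinor₂ R = 0 := by
  rw [← map_ex3Spin (Int.castRingHom R), ← comp_spinor₂ (Int.castRingHom R)]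
  exact mulVec_map_eq_zero _ (ex3Spin_int_mulVec_spinor i).2

theorem eq_of_ex3Spin_mulVec_eq_zero {R : Type*} [CommRing R] {ψ : Fin 8 → R}
    (hker0 : ex3Spin R 0 *ᵥ ψ = 0) (hker2 : ex3Spin R 2 *ᵥ ψ = 0) :
    ψ = ψ 4 • spinor₁ R + ψ 0 • spinor₂ R := by
  rw [← map_ex3Spin (Int.castRingHom R), ex3Spin_int_zero] at hker0
  rw [← map_ex3Spin (Int.castRingHom R), ex3Spin_int_two] at hker2
  have e0 := congrFun hker0 0
  have e2 := congrFun hker0 2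
  have e4 := congrFun hker0 4
  have e6 := congrFun hker0 6
  have f0 := congrFun hker2 0
  have f4 := congrFun hker2 4
  simp only [mulVec, dotProduct, Fin.sum_univ_eight, map_apply, of_apply, cons_val', cons_val,
    cons_val_zero, cons_val_one, cons_val_fin_one, Int.coe_castRingHom, Int.reduceNeg, Int.cast_zero,
    Int.cast_one, Int.cast_neg, Int.cast_ofNat, zero_mul, one_mul, neg_mul, zero_add, add_zero,
    Pi.zero_apply] at e0 e2 e4 e6 f0 f4
  have h1 : ψ 1 = ψ 0 := by linear_combination -e6
  have h2 : ψ 2 = ψ 0 := by linear_combination f4 + e6 + e4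
  have h3 : ψ 3 = -ψ 0 := by linear_combination e4 - h2
  have h5 : ψ 5 = ψ 4 := by linear_combination e2
  have h6 : ψ 6 = -ψ 4 := by linear_combination f0 + e2 - e0
  have h7 : ψ 7 = ψ 4 := by linear_combination -e0 - h6
  ext k
  fin_cases k <;> simp [spinor₁, spinor₂, h1, h2, h3, h5, h6, h7]

end Spin7

open Spin7

def spinLiftLinear : Matrix (Fin 7) (Fin 7) ℝ →ₗ[ℝ] Matrix (Fin 8) (Fin 8) ℝ where
  toFun := spinLift
  map_add' A B := by
    simp only [spinLift, ← smul_add, ← Finset.sum_add_distrib, Matrix.add_apply, ← ite_add_zero,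
      add_smul]
  map_smul' c A := by
    simp only [spinLift, Finset.smul_sum, smul_ite, smul_zero, Matrix.smul_apply, smul_eq_mul,
      mul_smul, smul_comm c, RingHom.id_apply]

theorem spinLiftLinear_apply (A : Matrix (Fin 7) (Fin 7) ℝ) : spinLiftLinear A = spinLift A := rfl

theorem E7_apply_of_lt {p q p' q' : Fin 7} (h : p < q) (h' : p' < q') :
    E7 p q q' p' = if p' = p ∧ q' = q then 1 else 0 := by
  simp only [E7, Matrix.sub_apply, Matrix.single_apply]
  split_ifs <;> grind

theorem spinLift_E7 {p q : Fin 7} (h : p < q) : spinLift (E7 p q) = (1/2 : ℝ) • (g p * g q) := by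
  have term : ∀ p' q' : Fin 7, (if p' < q' then E7 p q q' p' • (g p' * g q') else 0) =
      if p' = p then (if q' = q then g p * g q else 0) else 0 := by
    intro p' q'
    split_ifs with h' <;> simp_all [E7_apply_of_lt h]
  simp only [spinLift, term, Finset.sum_ite_irrel, Fintype.sum_ite_eq', Finset.sum_const_zero]

theorem spinLift_Aex3 (t : ℝ) (i : Fin 7) : spinLift (Aex3 t i) = (-t / 2) • ex3Spin ℝ i := by
  have lift (p q : Fin 7) (h : p < q) :
      spinLiftLinear (E7 p q) = (1/2 : ℝ) • (gen ℝ p * gen ℝ q) := by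
    rw [spinLiftLinear_apply, spinLift_E7 h, g_eq_gen]
  rw [← spinLiftLinear_apply]
  fin_cases i <;>
    simp only [Aex3, ex3Spin, Fin.zero_eta, Fin.mk_one, Fin.reduceFinMk, Fin.isValue, cons_val,
      cons_val_zero, cons_val_one, map_zero, map_add, map_sub, map_neg, map_smul, Fin.reduceLT,
      lift] <;>
    module

/-- two invariant parallel spinors for example (3). -/
theorem stmt18 (t : ℝ) (ht : 0 < t) :
    ∀ ψ : Fin 8 → ℝ, (∀ i : Fin 7, (spinLift (Aex3 t i)).mulVec ψ = 0) ↔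
      ψ ∈ Submodule.span ℝ
        {(![0, 0, 0, 0, 1, 1, -1, 1] : Fin 8 → ℝ),
         ![1, 1, 1, -1, 0, 0, 0, 0]} := by
  intro ψ
  have hscale : -t / 2 ≠ 0 := by linarith
  simp only [spinLift_Aex3, Matrix.smul_mulVec, smul_eq_zero, hscale, false_or]
  change _ ↔ ψ ∈ Submodule.span ℝ {spinor₁ ℝ, spinor₂ ℝ}
  rw [Submodule.mem_span_pair]
  constructor
  · intro hker
    exact ⟨ψ 4, ψ 0, (eq_of_ex3Spin_mulVec_eq_zero (hker 0) (hker 2)).symm⟩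
  · rintro ⟨a, b, rfl⟩ i
    simp only [Matrix.mulVec_add, Matrix.mulVec_smul, ex3Spin_mulVec_spinor₁,
      ex3Spin_mulVec_spinor₂, smul_zero, add_zero]
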